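/- arXiv:2010.14722 — 7 statements merged into one kernel-verified Lean document; each statement's English description precedes it below -/
import Mathlib

section
/- For every p > 0 there exists a constant C_p > 0 such that for all nonnegative reals a, b one has (a+b)^{2p+2} ≥ a^{2p+2} + b^{2p+2} + (2p+2)(a^{2p+1} b + a b^{2p+1}) - C_p a^{p+1} b^{p+1}. -/
open Real

private lemma key0 (p : ℝ) (hp : 0 < p) :
    ∀ a b : ℝ, 0 < b → b ≤ a →
      a ^ (2 * p + 2) + b ^ (2 * p + 2)
          + (2 * p + 2) * (a ^ (2 * p + 1) * b + a * b ^ (2 * p + 1))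
          - (2 * p + 2) * (a ^ (p + 1) * b ^ (p + 1)) ≤ (a + b) ^ (2 * p + 2) := by
  intro a b hb hba
  have ha : 0 < a := lt_of_lt_of_le hb hba
  -- Bernoulli step
  have hber : 1 + (p + 1) * (b / a) ≤ (1 + b / a) ^ (p + 1) :=
    one_add_mul_self_le_rpow_one_add (by have := div_nonneg hb.le ha.le; linarith) (by linarith)
  have h1 : a ^ (p + 1) + (p + 1) * (a ^ p * b) ≤ (a + b) ^ (p + 1) := by
    have hrw : (a + b) ^ (p + 1) = a ^ (p + 1) * (1 + b / a) ^ (p + 1) := by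
      rw [← Real.mul_rpow ha.le (by positivity)]
      congr 1
      field_simp
    have hap : a ^ (p + 1) = a ^ p * a := by
      rw [Real.rpow_add ha, Real.rpow_one]
    rw [hrw]
    calc a ^ (p + 1) + (p + 1) * (a ^ p * b)
        = a ^ (p + 1) * (1 + (p + 1) * (b / a)) := by
          rw [hap]; field_simp
      _ ≤ a ^ (p + 1) * (1 + b / a) ^ (p + 1) := by
          apply mul_le_mul_of_nonneg_left hber (by positivity)
  have h1nn : 0 ≤ a ^ (p + 1) + (p + 1) * (a ^ p * b) := by positivity
  have h2 : (a ^ (p + 1) + (p + 1) * (a ^ p * b)) ^ (2 : ℕ)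
      ≤ ((a + b) ^ (p + 1)) ^ (2 : ℕ) := pow_le_pow_left₀ h1nn h1 2
  have e0 : ((a + b) ^ (p + 1)) ^ (2 : ℕ) = (a + b) ^ (2 * p + 2) := by
    rw [← Real.rpow_natCast ((a + b) ^ (p + 1)) 2, ← Real.rpow_mul (by positivity)]
    norm_num; ring_nf
  have e1 : (a ^ (p + 1)) ^ (2 : ℕ) = a ^ (2 * p + 2) := by
    rw [← Real.rpow_natCast (a ^ (p + 1)) 2, ← Real.rpow_mul ha.le]
    norm_num; ring_nf
  have e2 : a ^ (p + 1) * a ^ p = a ^ (2 * p + 1) := by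
    rw [← Real.rpow_add ha]; ring_nf
  have e3 : (a ^ p) ^ (2 : ℕ) = a ^ (2 * p) := by
    rw [← Real.rpow_natCast (a ^ p) 2, ← Real.rpow_mul ha.le]
    norm_num; ring_nf
  have h2' : a ^ (2 * p + 2) + (2 * p + 2) * (a ^ (2 * p + 1) * b)
      + (p + 1) ^ 2 * (a ^ (2 * p) * b ^ 2) ≤ (a + b) ^ (2 * p + 2) := by
    rw [← e0]
    calc a ^ (2 * p + 2) + (2 * p + 2) * (a ^ (2 * p + 1) * b)
        + (p + 1) ^ 2 * (a ^ (2 * p) * b ^ 2)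
        = (a ^ (p + 1)) ^ (2 : ℕ) + (2 * p + 2) * (a ^ (p + 1) * a ^ p * b)
          + (p + 1) ^ 2 * ((a ^ p) ^ (2 : ℕ) * b ^ 2) := by rw [e1, e2, e3]
      _ = (a ^ (p + 1) + (p + 1) * (a ^ p * b)) ^ (2 : ℕ) := by ring
      _ ≤ ((a + b) ^ (p + 1)) ^ (2 : ℕ) := h2
  -- b^(2p+2) ≤ (p+1)^2 * a^(2p) * b^2
  have hb2p : b ^ (2 * p) ≤ a ^ (2 * p) := Real.rpow_le_rpow hb.le hba (by linarith)
  have eb : b ^ (2 * p + 2) = b ^ (2 * p) * b ^ 2 := by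
    rw [← Real.rpow_natCast b 2, ← Real.rpow_add hb]
    norm_num
  have h4 : b ^ (2 * p + 2) ≤ (p + 1) ^ 2 * (a ^ (2 * p) * b ^ 2) := by
    rw [eb]
    have h41 : b ^ (2 * p) * b ^ 2 ≤ a ^ (2 * p) * b ^ 2 :=
      mul_le_mul_of_nonneg_right hb2p (by positivity)
    have h42 : (1 : ℝ) * (a ^ (2 * p) * b ^ 2) ≤ (p + 1) ^ 2 * (a ^ (2 * p) * b ^ 2) := by
      apply mul_le_mul_of_nonneg_right _ (by positivity)
      nlinarith
    linarith
  -- a * b^(2p+1) ≤ a^(p+1) * b^(p+1)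
  have hbp : b ^ p ≤ a ^ p := Real.rpow_le_rpow hb.le hba hp.le
  have eb2 : b ^ (2 * p + 1) = b ^ p * b ^ (p + 1) := by
    rw [← Real.rpow_add hb]; ring_nf
  have ea2 : a * a ^ p = a ^ (p + 1) := by
    rw [Real.rpow_add ha, Real.rpow_one]; ring
  have h5 : a * b ^ (2 * p + 1) ≤ a ^ (p + 1) * b ^ (p + 1) := by
    rw [eb2, ← ea2]
    have : b ^ p * b ^ (p + 1) ≤ a ^ p * b ^ (p + 1) :=
      mul_le_mul_of_nonneg_right hbp (by positivity)
    calc a * (b ^ p * b ^ (p + 1)) ≤ a * (a ^ p * b ^ (p + 1)) :=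
          mul_le_mul_of_nonneg_left this ha.le
      _ = a * a ^ p * b ^ (p + 1) := by ring
  nlinarith [h2', h4, h5]

theorem stmt0 (p : ℝ) (hp : 0 < p) :
    ∃ C : ℝ, 0 < C ∧ ∀ a b : ℝ, 0 ≤ a → 0 ≤ b →
      (a + b) ^ (2 * p + 2) ≥
        a ^ (2 * p + 2) + b ^ (2 * p + 2)
          + (2 * p + 2) * (a ^ (2 * p + 1) * b + a * b ^ (2 * p + 1))
          - C * (a ^ (p + 1) * b ^ (p + 1)) := by
  refine ⟨2 * p + 2, by linarith, ?_⟩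
  have key : ∀ a b : ℝ, 0 ≤ a → 0 ≤ b → b ≤ a →
      a ^ (2 * p + 2) + b ^ (2 * p + 2)
          + (2 * p + 2) * (a ^ (2 * p + 1) * b + a * b ^ (2 * p + 1))
          - (2 * p + 2) * (a ^ (p + 1) * b ^ (p + 1)) ≤ (a + b) ^ (2 * p + 2) := by
    intro a b ha hb hba
    rcases eq_or_lt_of_le hb with hb0 | hb0
    · simp [← hb0, Real.zero_rpow (by positivity : (2 : ℝ) * p + 2 ≠ 0),
        Real.zero_rpow (by positivity : (2 : ℝ) * p + 1 ≠ 0),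
        Real.zero_rpow (by positivity : p + 1 ≠ 0)]
    · exact key0 p hp a b hb0 hba
  intro a b ha hb
  rcases le_total b a with h | h
  · exact key a b ha hb h
  · have := key b a hb ha h
    rw [add_comm b a] at this
    linarith [this]
end

section
/- Let p > 0 and η ∈ (0, p). Then there exists a constant C > 0 such that for all nonnegative reals a₁, a₂, b₁, b₂: (a₁+b₁)^{p+1}(a₂+b₂)^{p+1} ≥ a₁^{p+1} a₂^{p+1} + b₁^{p+1} b₂^{p+1} + (p+1)(a₁^p a₂^{p+1} b₁ + a₁^{p+1} a₂^p b₂ + a₂ b₁^{p+1} b₂^p) - C (a₁^{p-η} a₂^{p+1} b₁^{1+η} + a₁^{1+η} b₂^{p+1} b₁^{p-η}). -/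
open Real

private lemma bern {x y q : ℝ} (hx : 0 ≤ x) (hy : 0 ≤ y) (hq : 1 < q) :
    x ^ q + q * x ^ (q - 1) * y ≤ (x + y) ^ q := by
  rcases eq_or_lt_of_le hx with rfl | hx
  · rw [Real.zero_rpow (by linarith), Real.zero_rpow (by linarith), zero_add]
    simpa using Real.rpow_nonneg hy q
  · have h := one_add_mul_self_le_rpow_one_add (s := y / x) (le_trans (by norm_num : (-1:ℝ) ≤ 0) (by positivity)) hq.le
    have hx' : (0:ℝ) < x ^ q := Real.rpow_pos_of_pos hx q
    have key : x ^ q * (1 + q * (y / x)) ≤ x ^ q * (1 + y / x) ^ q :=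
      mul_le_mul_of_nonneg_left h hx'.le
    have e1 : x ^ q * (1 + y / x) ^ q = (x + y) ^ q := by
      rw [← Real.mul_rpow hx.le (by positivity)]
      rw [mul_add, mul_one, mul_div_cancel₀ _ hx.ne']
    have e2 : x ^ q * (1 + q * (y / x)) = x ^ q + q * x ^ (q - 1) * y := by
      have : x ^ q = x ^ (q - 1) * x := by
        rw [← Real.rpow_add_one hx.ne' (q - 1), sub_add_cancel]
      rw [mul_add, mul_one, this]
      field_simp
    rw [e2] at key; rw [e1] at key; exact key

private lemma superadd {x y q : ℝ} (hx : 0 ≤ x) (hy : 0 ≤ y) (hq : 1 ≤ q) :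
    x ^ q + y ^ q ≤ (x + y) ^ q := by
  have hxy : 0 ≤ x + y := by linarith
  have ex : x ^ q = x * x ^ (q - 1) := by
    rw [← Real.rpow_one_add' hx (by linarith), add_sub_cancel]
  have ey : y ^ q = y * y ^ (q - 1) := by
    rw [← Real.rpow_one_add' hy (by linarith), add_sub_cancel]
  have exy : (x + y) ^ q = (x + y) * (x + y) ^ (q - 1) := by
    rw [← Real.rpow_one_add' hxy (by linarith), add_sub_cancel]
  have hx1 : x ^ (q - 1) ≤ (x + y) ^ (q - 1) :=
    Real.rpow_le_rpow hx (by linarith) (by linarith)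
  have hy1 : y ^ (q - 1) ≤ (x + y) ^ (q - 1) :=
    Real.rpow_le_rpow hy (by linarith) (by linarith)
  rw [ex, ey, exy]
  nlinarith [mul_le_mul_of_nonneg_left hx1 hx, mul_le_mul_of_nonneg_left hy1 hy]

private lemma deficit {p η a b : ℝ} (hp : 0 < p) (hη : 0 < η) (hηp : η < p)
    (ha : 0 ≤ a) (hb : 0 ≤ b) :
    (p + 1) * a ^ p * b ≤
      ((a + b) ^ (p + 1) - a ^ (p + 1) - b ^ (p + 1))
        + (p + 1) * (a ^ (p - η) * b ^ (1 + η)) := by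
  have hq : (1:ℝ) < p + 1 := by linarith
  rcases le_total b a with hba | hab
  · -- b ≤ a : use Bernoulli, b^{p+1} ≤ a^{p-η} b^{1+η}
    have h1 : a ^ (p + 1) + (p + 1) * a ^ (p + 1 - 1) * b ≤ (a + b) ^ (p + 1) :=
      bern ha hb hq
    rw [add_sub_cancel_right] at h1
    have h2 : b ^ (p + 1) ≤ a ^ (p - η) * b ^ (1 + η) := by
      have e : b ^ (p + 1) = b ^ (p - η) * b ^ (1 + η) := by
        rw [← Real.rpow_add' hb (by linarith)]; ring_nf
      rw [e]
      exact mul_le_mul_of_nonneg_right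
        (Real.rpow_le_rpow hb hba (by linarith)) (Real.rpow_nonneg hb _)
    nlinarith [mul_nonneg (Real.rpow_nonneg ha (p - η)) (Real.rpow_nonneg hb (1 + η))]
  · -- a ≤ b : use superadditivity, a^p b ≤ a^{p-η} b^{1+η}
    have h1 : a ^ (p + 1) + b ^ (p + 1) ≤ (a + b) ^ (p + 1) := superadd ha hb hq.le
    have h2 : a ^ p * b ≤ a ^ (p - η) * b ^ (1 + η) := by
      have ea : a ^ p = a ^ (p - η) * a ^ η := by
        rw [← Real.rpow_add' ha (by linarith)]; ring_nf
      have eb : b ^ (1 + η) = b ^ η * b := by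
        rw [Real.rpow_add' hb (by linarith), Real.rpow_one, mul_comm]
      rw [ea, eb]
      have : a ^ η ≤ b ^ η := Real.rpow_le_rpow ha hab hη.le
      have h3 : a ^ η * b ≤ b ^ η * b := mul_le_mul_of_nonneg_right this hb
      nlinarith [mul_le_mul_of_nonneg_left h3 (Real.rpow_nonneg ha (p - η))]
    nlinarith

theorem stmt1 (p η : ℝ) (hp : 0 < p) (hη : 0 < η) (hηp : η < p) :
    ∃ C : ℝ, 0 < C ∧ ∀ a₁ a₂ b₁ b₂ : ℝ, 0 ≤ a₁ → 0 ≤ a₂ → 0 ≤ b₁ → 0 ≤ b₂ →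
      (a₁ + b₁) ^ (p + 1) * (a₂ + b₂) ^ (p + 1) ≥
        a₁ ^ (p + 1) * a₂ ^ (p + 1) + b₁ ^ (p + 1) * b₂ ^ (p + 1)
          + (p + 1) * (a₁ ^ p * a₂ ^ (p + 1) * b₁ + a₁ ^ (p + 1) * a₂ ^ p * b₂
              + a₂ * b₁ ^ (p + 1) * b₂ ^ p)
          - C * (a₁ ^ (p - η) * a₂ ^ (p + 1) * b₁ ^ (1 + η)
              + a₁ ^ (1 + η) * b₂ ^ (p + 1) * b₁ ^ (p - η)) := by
  refine ⟨p + 1, by linarith, fun a₁ a₂ b₁ b₂ ha₁ ha₂ hb₁ hb₂ => ?_⟩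
  have hq : (1:ℝ) < p + 1 := by linarith
  set S := (a₂ + b₂) ^ (p + 1) with hS
  -- Bernoulli bounds on the second factor
  have h1 : a₂ ^ (p + 1) + (p + 1) * a₂ ^ p * b₂ ≤ S := by
    have := bern ha₂ hb₂ hq
    rwa [add_sub_cancel_right] at this
  have h2 : b₂ ^ (p + 1) + (p + 1) * b₂ ^ p * a₂ ≤ S := by
    have := bern hb₂ ha₂ hq
    rwa [add_sub_cancel_right, add_comm b₂ a₂] at this
  have h4 : a₂ ^ (p + 1) ≤ S :=
    Real.rpow_le_rpow ha₂ (by linarith) (by linarith)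
  have h3 : a₁ ^ (p + 1) + b₁ ^ (p + 1) ≤ (a₁ + b₁) ^ (p + 1) := superadd ha₁ hb₁ hq.le
  have hD := deficit hp hη hηp ha₁ hb₁
  -- nonnegativity facts
  have hA : 0 ≤ a₁ ^ (p + 1) := Real.rpow_nonneg ha₁ _
  have hB : 0 ≤ b₁ ^ (p + 1) := Real.rpow_nonneg hb₁ _
  have hA2 : 0 ≤ a₂ ^ (p + 1) := Real.rpow_nonneg ha₂ _
  have hG : 0 ≤ (a₁ + b₁) ^ (p + 1) - a₁ ^ (p + 1) - b₁ ^ (p + 1) := by linarith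
  have herr2 : 0 ≤ a₁ ^ (1 + η) * b₂ ^ (p + 1) * b₁ ^ (p - η) := by positivity
  have hSnn : 0 ≤ S := Real.rpow_nonneg (by linarith) _
  have key1 : a₁ ^ (p + 1) * (a₂ ^ (p + 1) + (p + 1) * a₂ ^ p * b₂) ≤ a₁ ^ (p + 1) * S :=
    mul_le_mul_of_nonneg_left h1 hA
  have key2 : b₁ ^ (p + 1) * (b₂ ^ (p + 1) + (p + 1) * b₂ ^ p * a₂) ≤ b₁ ^ (p + 1) * S :=
    mul_le_mul_of_nonneg_left h2 hB
  have key3 : ((a₁ + b₁) ^ (p + 1) - a₁ ^ (p + 1) - b₁ ^ (p + 1)) * a₂ ^ (p + 1)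
      ≤ ((a₁ + b₁) ^ (p + 1) - a₁ ^ (p + 1) - b₁ ^ (p + 1)) * S :=
    mul_le_mul_of_nonneg_left h4 hG
  have key4 : ((p + 1) * a₁ ^ p * b₁ - (p + 1) * (a₁ ^ (p - η) * b₁ ^ (1 + η)))
      * a₂ ^ (p + 1)
      ≤ ((a₁ + b₁) ^ (p + 1) - a₁ ^ (p + 1) - b₁ ^ (p + 1)) * a₂ ^ (p + 1) :=
    mul_le_mul_of_nonneg_right (by linarith) hA2
  nlinarith [key1, key2, key3, key4, herr2]
end

section
/- Let p > 0 and η ∈ (0,p). Define f(x,y) = (x+1)^{p+1}(y+1)^{p+1} − x^{p+1} y^{p+1} − 1 − (p+1)(x^p y^{p+1} + x^{p+1} y^p + y) + C (x^{p−η} y^{p+1} + x^{1+η}). Then there exists x₁ > 0 such that if C ≥ 1, then f(x,y) ≥ 0 for all (x,y) ∈ [0, x₁] × [0, ∞). -/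
open Real Set

private lemma bern_aux {p : ℝ} (hp : 0 < p) {y : ℝ} (hy : 0 ≤ y) :
    y ^ (p + 1) + (p + 1) * y ^ p ≤ (y + 1) ^ (p + 1) := by
  rcases hy.eq_or_lt with h | h
  · rw [← h, Real.zero_rpow (by positivity), Real.zero_rpow hp.ne',
      show (0:ℝ) + 1 = 1 by norm_num, Real.one_rpow]
    norm_num
  · have hb : (1 : ℝ) + (p + 1) * (1 / y) ≤ (1 + 1 / y) ^ (p + 1) :=
      one_add_mul_self_le_rpow_one_add
      (by have h0 : (0:ℝ) ≤ 1 / y := by positivity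
          linarith) (by linarith)
    have hyp : (0 : ℝ) < y ^ (p + 1) := Real.rpow_pos_of_pos h _
    have hmul := mul_le_mul_of_nonneg_left hb hyp.le
    have h1 : y ^ (p + 1) * (1 + 1 / y) ^ (p + 1) = (y + 1) ^ (p + 1) := by
      rw [← Real.mul_rpow h.le (by positivity)]
      congr 1
      field_simp
    have h2 : y ^ (p + 1) * (1 + (p + 1) * (1 / y)) = y ^ (p + 1) + (p + 1) * y ^ p := by
      rw [Real.rpow_add_one h.ne' p]
      field_simp
    rw [h1, h2] at hmul
    exact hmul

theorem stmt3 (p η : ℝ) (hp : 0 < p) (hη : 0 < η) (hηp : η < p) :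
    ∃ x₁ : ℝ, 0 < x₁ ∧ ∀ C : ℝ, 1 ≤ C → ∀ x y : ℝ, 0 ≤ x → x ≤ x₁ → 0 ≤ y →
      0 ≤ (x + 1) ^ (p + 1) * (y + 1) ^ (p + 1) - x ^ (p + 1) * y ^ (p + 1) - 1
          - (p + 1) * (x ^ p * y ^ (p + 1) + x ^ (p + 1) * y ^ p + y)
          + C * (x ^ (p - η) * y ^ (p + 1) + x ^ (1 + η)) := by
  have hppos : (0 : ℝ) < p * (p + 1) := by positivity
  set a : ℝ := (p - η) / (p * (p + 1)) with ha_def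
  have ha0 : 0 < a := div_pos (by linarith) hppos
  have ha1 : a < 1 := by
    rw [ha_def, div_lt_one hppos]; nlinarith
  set x₁ : ℝ := a ^ (1 / η) with hx₁_def
  have hx₁pos : 0 < x₁ := Real.rpow_pos_of_pos ha0 _
  have hx₁le1 : x₁ ≤ 1 := Real.rpow_le_one ha0.le ha1.le (by positivity)
  refine ⟨x₁, hx₁pos, ?_⟩
  intro C hC x y hx hxx₁ hy
  have hx1 : x ≤ 1 := hxx₁.trans hx₁le1
  -- key bound on x ^ η
  have hxη : x ^ η ≤ a := by
    have h1 : x ^ η ≤ x₁ ^ η := Real.rpow_le_rpow hx hxx₁ hη.le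
    have h2 : x₁ ^ η = a := by
      rw [hx₁_def, ← Real.rpow_mul ha0.le]
      rw [one_div_mul_cancel hη.ne', Real.rpow_one]
    linarith [h1, h2.le]
  -- the function of t
  set g : ℝ → ℝ := fun t => (t + 1) ^ (p + 1) * (y + 1) ^ (p + 1) - t ^ (p + 1) * y ^ (p + 1) - 1
      - (p + 1) * (t ^ p * y ^ (p + 1) + t ^ (p + 1) * y ^ p + y)
      + C * (t ^ (p - η) * y ^ (p + 1) + t ^ (1 + η)) with hg_def
  have hg0 : 0 ≤ g 0 := by
    have hz1 : (0 : ℝ) ^ (p + 1) = 0 := Real.zero_rpow (by positivity)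
    have hz2 : (0 : ℝ) ^ p = 0 := Real.zero_rpow hp.ne'
    have hz3 : (0 : ℝ) ^ (p - η) = 0 := Real.zero_rpow (by intro h; linarith [h]; )
    have hz4 : (0 : ℝ) ^ (1 + η) = 0 := Real.zero_rpow (by positivity)
    have hb : 1 + (p + 1) * y ≤ (1 + y) ^ (p + 1) :=
      one_add_mul_self_le_rpow_one_add (by linarith) (by linarith)
    simp only [hg_def, hz1, hz2, hz3, hz4, zero_add, Real.one_rpow]
    rw [add_comm 1 y] at hb
    nlinarith [hb]
  -- monotonicity on [0, x₁]
  have hmono : MonotoneOn g (Icc 0 x₁) := by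
    have hcont : ContinuousOn g (Icc 0 x₁) := by
      have c0 : Continuous fun t : ℝ => t + 1 := by continuity
      have c1 : Continuous fun t : ℝ => t ^ (p + 1) :=
        Real.continuous_rpow_const (by positivity)
      have c2 : Continuous fun t : ℝ => t ^ p := Real.continuous_rpow_const hp.le
      have c3 : Continuous fun t : ℝ => t ^ (p - η) :=
        Real.continuous_rpow_const (by linarith)
      have c4 : Continuous fun t : ℝ => t ^ (1 + η) :=
        Real.continuous_rpow_const (by positivity)
      have : Continuous g := by
        rw [hg_def]
        exact (((((c1.comp c0).mul continuous_const).sub (c1.mul continuous_const)).sub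
          continuous_const).sub
          (continuous_const.mul (((c2.mul continuous_const).add
            (c1.mul continuous_const)).add continuous_const))).add
          (continuous_const.mul ((c3.mul continuous_const).add c4))
      exact this.continuousOn
    apply monotoneOn_of_hasDerivWithinAt_nonneg (convex_Icc 0 x₁) hcont
      (f' := fun t => (p + 1) * (t + 1) ^ p * (y + 1) ^ (p + 1) - (p + 1) * t ^ p * y ^ (p + 1)
        - (p + 1) * (p * t ^ (p - 1) * y ^ (p + 1) + (p + 1) * t ^ p * y ^ p)
        + C * ((p - η) * t ^ (p - η - 1) * y ^ (p + 1) + (1 + η) * t ^ η))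
    · -- derivative
      intro t ht
      rw [interior_Icc] at ht
      have ht0 : 0 < t := ht.1
      have h1 : HasDerivAt (fun t : ℝ => (t + 1) ^ (p + 1))
          (1 * (p + 1) * (t + 1) ^ (p + 1 - 1)) t :=
        ((hasDerivAt_id t).add_const 1).rpow_const (Or.inl (by positivity))
      have h2 : HasDerivAt (fun t : ℝ => t ^ (p + 1)) ((p + 1) * t ^ (p + 1 - 1)) t :=
        Real.hasDerivAt_rpow_const (Or.inl ht0.ne')
      have h3 : HasDerivAt (fun t : ℝ => t ^ p) (p * t ^ (p - 1)) t :=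
        Real.hasDerivAt_rpow_const (Or.inl ht0.ne')
      have h4 : HasDerivAt (fun t : ℝ => t ^ (p - η)) ((p - η) * t ^ (p - η - 1)) t :=
        Real.hasDerivAt_rpow_const (Or.inl ht0.ne')
      have h5 : HasDerivAt (fun t : ℝ => t ^ (1 + η)) ((1 + η) * t ^ (1 + η - 1)) t :=
        Real.hasDerivAt_rpow_const (Or.inl ht0.ne')
      have H : HasDerivAt g
          (1 * (p + 1) * (t + 1) ^ (p + 1 - 1) * (y + 1) ^ (p + 1)
            - (p + 1) * t ^ (p + 1 - 1) * y ^ (p + 1)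
            - (p + 1) * ((p * t ^ (p - 1)) * y ^ (p + 1)
              + ((p + 1) * t ^ (p + 1 - 1)) * y ^ p)
            + C * ((p - η) * t ^ (p - η - 1) * y ^ (p + 1)
              + (1 + η) * t ^ (1 + η - 1))) t := by
        rw [hg_def]
        exact ((((h1.mul_const _).sub (h2.mul_const _)).sub_const 1).sub
          ((((h3.mul_const _).add (h2.mul_const _)).add_const y).const_mul (p + 1))).add
          (((h4.mul_const _).add h5).const_mul C)
      have he1 : p + 1 - 1 = p := by ring
      have he2 : 1 + η - 1 = η := by ring
      rw [he1, he2] at H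
      have H' : HasDerivAt g
          ((p + 1) * (t + 1) ^ p * (y + 1) ^ (p + 1) - (p + 1) * t ^ p * y ^ (p + 1)
            - (p + 1) * (p * t ^ (p - 1) * y ^ (p + 1) + (p + 1) * t ^ p * y ^ p)
            + C * ((p - η) * t ^ (p - η - 1) * y ^ (p + 1) + (1 + η) * t ^ η)) t := by
        convert H using 1
        ring
      rw [interior_Icc]
      exact H'.hasDerivWithinAt
    · -- nonnegativity of derivative
      intro t ht
      rw [interior_Icc] at ht
      have ht0 : 0 < t := ht.1
      have ht1 : t ≤ 1 := ht.2.le.trans hx₁le1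
      have htη : t ^ η ≤ a := by
        have h1 : t ^ η ≤ x₁ ^ η := Real.rpow_le_rpow ht0.le ht.2.le hη.le
        have h2 : x₁ ^ η = a := by
          rw [hx₁_def, ← Real.rpow_mul ha0.le]
          rw [one_div_mul_cancel hη.ne', Real.rpow_one]
        linarith [h1, h2.le]
      -- basic nonneg facts
      have nyp1 : (0 : ℝ) ≤ y ^ (p + 1) := Real.rpow_nonneg hy _
      have nyp : (0 : ℝ) ≤ y ^ p := Real.rpow_nonneg hy _
      have ntpe : (0 : ℝ) ≤ t ^ (p - η - 1) := (Real.rpow_pos_of_pos ht0 _).le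
      have ntη : (0 : ℝ) ≤ t ^ η := (Real.rpow_pos_of_pos ht0 _).le
      -- (t+1)^p ≥ 1
      have f1 : 1 ≤ (t + 1) ^ p := by
        have := Real.rpow_le_rpow (zero_le_one) (by linarith : (1 : ℝ) ≤ t + 1) hp.le
        rwa [Real.one_rpow] at this
      -- Bernoulli-type bound on (y+1)^(p+1)
      have f2 : y ^ (p + 1) + (p + 1) * y ^ p ≤ (y + 1) ^ (p + 1) := bern_aux hp hy
      -- t^p ≤ 1
      have f3 : t ^ p ≤ 1 := Real.rpow_le_one ht0.le ht1 hp.le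
      -- p(p+1) t^(p-1) ≤ (p-η) t^(p-η-1)
      have f4 : p * (p + 1) * t ^ (p - 1) ≤ (p - η) * t ^ (p - η - 1) := by
        have hsplit : t ^ (p - 1) = t ^ (p - η - 1) * t ^ η := by
          rw [← Real.rpow_add ht0]; ring_nf
        rw [hsplit]
        have : p * (p + 1) * t ^ η ≤ p - η := by
          have := mul_le_mul_of_nonneg_left htη hppos.le
          rw [ha_def] at this
          calc p * (p + 1) * t ^ η ≤ p * (p + 1) * ((p - η) / (p * (p + 1))) := this
            _ = p - η := by field_simp
        calc p * (p + 1) * (t ^ (p - η - 1) * t ^ η)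
            = (p * (p + 1) * t ^ η) * t ^ (p - η - 1) := by ring
          _ ≤ (p - η) * t ^ (p - η - 1) :=
              mul_le_mul_of_nonneg_right this ntpe
      have hBpos : (0 : ℝ) ≤ (y + 1) ^ (p + 1) := Real.rpow_nonneg (by linarith) _
      -- assemble
      have m1 : (p + 1) * (y + 1) ^ (p + 1) ≤ (p + 1) * (t + 1) ^ p * (y + 1) ^ (p + 1) := by
        have h := mul_le_mul_of_nonneg_left (mul_le_mul_of_nonneg_right f1 hBpos)
          (by linarith : (0:ℝ) ≤ p + 1)
        linarith [h]
      have m2 : (p + 1) * (y ^ (p + 1) + (p + 1) * y ^ p) ≤ (p + 1) * (y + 1) ^ (p + 1) :=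
        mul_le_mul_of_nonneg_left f2 (by linarith)
      have m3 : (p + 1) * t ^ p * y ^ (p + 1) ≤ (p + 1) * y ^ (p + 1) := by
        have h := mul_le_mul_of_nonneg_left (mul_le_mul_of_nonneg_right f3 nyp1)
          (by linarith : (0:ℝ) ≤ p + 1)
        linarith [h]
      have m4 : (p + 1) * ((p + 1) * (t ^ p * y ^ p)) ≤ (p + 1) * ((p + 1) * y ^ p) := by
        have h := mul_le_mul_of_nonneg_left (mul_le_mul_of_nonneg_right f3 nyp)
          (by positivity : (0:ℝ) ≤ (p + 1) * (p + 1))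
        linarith [h]
      have m5 : (p + 1) * (p * t ^ (p - 1) * y ^ (p + 1)) ≤
          (p - η) * t ^ (p - η - 1) * y ^ (p + 1) := by
        have h := mul_le_mul_of_nonneg_right f4 nyp1
        linarith [h]
      have m6 : (p - η) * t ^ (p - η - 1) * y ^ (p + 1) + (1 + η) * t ^ η ≤
          C * ((p - η) * t ^ (p - η - 1) * y ^ (p + 1) + (1 + η) * t ^ η) := by
        have hterm : (0 : ℝ) ≤ (p - η) * t ^ (p - η - 1) * y ^ (p + 1) + (1 + η) * t ^ η := by
          have : (0 : ℝ) ≤ (p - η) * t ^ (p - η - 1) * y ^ (p + 1) :=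
            mul_nonneg (mul_nonneg (by linarith) ntpe) nyp1
          nlinarith [ntη, hη]
        exact le_mul_of_one_le_left hterm hC
      have hne : (0 : ℝ) ≤ (1 + η) * t ^ η := by positivity
      linarith [m1, m2, m3, m4, m5, m6, hne]
  have hfin : g 0 ≤ g x := hmono (left_mem_Icc.mpr hx₁pos.le) ⟨hx, hxx₁⟩ hx
  have : 0 ≤ g x := le_trans hg0 hfin
  simpa [hg_def] using this
end

section
/- Let p > 0. For all x ≥ 0 with x^p ≤ 1/(2(p+1)) and all y ≥ 0, one has (x+1)^p (y+1)^{p+1} − x^p y^{p+1} − (p+1) x^p y^p ≥ 0. -/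
open Real

theorem stmt4 (p : ℝ) (hp : 0 < p) (x y : ℝ) (hx : 0 ≤ x)
    (hxp : x ^ p ≤ 1 / (2 * (p + 1))) (hy : 0 ≤ y) :
    0 ≤ (x + 1) ^ p * (y + 1) ^ (p + 1) - x ^ p * y ^ (p + 1) - (p + 1) * x ^ p * y ^ p := by
  have hy1 : (1:ℝ) ≤ y + 1 := by linarith
  have h1 : y ^ p ≤ (y + 1) ^ (p + 1) := by
    calc y ^ p ≤ (y + 1) ^ p := Real.rpow_le_rpow hy (by linarith) hp.le
    _ ≤ (y + 1) ^ (p + 1) := Real.rpow_le_rpow_of_exponent_le hy1 (by linarith)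
  have h2 : y ^ (p + 1) ≤ (y + 1) ^ (p + 1) :=
    Real.rpow_le_rpow hy (by linarith) (by linarith)
  have h3 : (1:ℝ) ≤ (x + 1) ^ p := Real.one_le_rpow (by linarith) hp.le
  have h4 : x ^ p * (p + 2) ≤ 1 := by
    have : x ^ p * (p + 2) ≤ (1 / (2 * (p + 1))) * (p + 2) := by
      apply mul_le_mul_of_nonneg_right hxp (by linarith)
    have h5 : (1 / (2 * (p + 1))) * (p + 2) ≤ 1 := by
      rw [div_mul_eq_mul_div, div_le_one (by linarith)]
      linarith
    linarith
  have hxp0 : 0 ≤ x ^ p := Real.rpow_nonneg hx p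
  have hyp0 : 0 ≤ (y + 1) ^ (p + 1) := Real.rpow_nonneg (by linarith) _
  nlinarith [mul_le_mul_of_nonneg_left h1 hxp0, mul_le_mul_of_nonneg_left h2 hxp0,
    mul_le_mul_of_nonneg_right h3 hyp0, mul_le_mul_of_nonneg_right h4 hyp0, hp.le]
end

section
/- Let 0 < p₃ < 1 and let λ₁, λ₂ be positive reals with λ₂ < ((1+p₃)²/(1−p₃)²) λ₁. Let (ξ_n) be a sequence of positive reals with ξ₁ > 0 and √(ξ_{n+1}) = min{ (2p₂+1)√(ξ_n), (p₃+1)√(λ₁) + p₃ √(ξ_n) } for some p₂ > 0. If ξ_n < λ₂ for all n, then a contradiction follows; that is, there exists n with ξ_n ≥ λ₂. -/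
open Real

theorem stmt7 (p₂ p₃ lam₁ lam₂ : ℝ) (hp₂ : 0 < p₂) (hp₃ : 0 < p₃) (hp₃1 : p₃ < 1)
    (hlam₁ : 0 < lam₁) (hlam₂ : 0 < lam₂)
    (hlt : lam₂ < ((1 + p₃) ^ 2 / (1 - p₃) ^ 2) * lam₁)
    (ξ : ℕ → ℝ) (hpos : ∀ n, 0 < ξ n)
    (hrec : ∀ n, Real.sqrt (ξ (n + 1)) =
      min ((2 * p₂ + 1) * Real.sqrt (ξ n))
        ((p₃ + 1) * Real.sqrt lam₁ + p₃ * Real.sqrt (ξ n))) :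
    ∃ n, lam₂ ≤ ξ n := by
  by_contra hcon
  push_neg at hcon
  have h1p : (0:ℝ) < 1 - p₃ := by linarith
  have hs0 : 0 < Real.sqrt (ξ 0) := Real.sqrt_pos.mpr (hpos 0)
  have hsl1 : 0 < Real.sqrt lam₁ := Real.sqrt_pos.mpr hlam₁
  -- √lam₂ * (1 - p₃) < (p₃+1)√lam₁
  have hL : Real.sqrt lam₂ * (1 - p₃) < (p₃ + 1) * Real.sqrt lam₁ := by
    have h1 : Real.sqrt lam₂ < Real.sqrt (((1 + p₃) ^ 2 / (1 - p₃) ^ 2) * lam₁) :=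
      Real.sqrt_lt_sqrt hlam₂.le hlt
    have h2 : Real.sqrt (((1 + p₃) ^ 2 / (1 - p₃) ^ 2) * lam₁)
        = ((1 + p₃) / (1 - p₃)) * Real.sqrt lam₁ := by
      rw [show ((1 + p₃) ^ 2 / (1 - p₃) ^ 2 : ℝ) = ((1 + p₃) / (1 - p₃)) ^ 2 by
        field_simp, Real.sqrt_mul (sq_nonneg _),
        Real.sqrt_sq (div_nonneg (by linarith) (by linarith))]
    rw [h2] at h1
    have h3 := mul_lt_mul_of_pos_right h1 h1p
    have h5 : (1 + p₃) / (1 - p₃) * (1 - p₃) = 1 + p₃ := div_mul_cancel₀ _ h1p.ne'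
    nlinarith [h3, h5]
  set δ : ℝ := min (2 * p₂ * Real.sqrt (ξ 0))
      ((p₃ + 1) * Real.sqrt lam₁ - Real.sqrt lam₂ * (1 - p₃)) with hδdef
  have hδ : 0 < δ := lt_min (by positivity) (by linarith)
  have key : ∀ n : ℕ, Real.sqrt (ξ 0) + n * δ ≤ Real.sqrt (ξ n) := by
    intro n
    induction n with
    | zero => simp
    | succ n ih =>
      have hb : Real.sqrt (ξ n) ≤ Real.sqrt lam₂ := Real.sqrt_le_sqrt (hcon n).le
      have hn0 : (0:ℝ) ≤ (n:ℝ) := Nat.cast_nonneg n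
      have h0 : Real.sqrt (ξ 0) ≤ Real.sqrt (ξ n) := by nlinarith
      rw [hrec n, le_min_iff]
      constructor
      · have hδ1 : δ ≤ 2 * p₂ * Real.sqrt (ξ 0) := min_le_left _ _
        push_cast
        nlinarith
      · have hδ2 : δ ≤ (p₃ + 1) * Real.sqrt lam₁ - Real.sqrt lam₂ * (1 - p₃) :=
          min_le_right _ _
        push_cast
        nlinarith
  obtain ⟨n, hn⟩ := exists_nat_gt ((Real.sqrt lam₂ - Real.sqrt (ξ 0)) / δ)
  have hn' : Real.sqrt lam₂ - Real.sqrt (ξ 0) < n * δ := by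
    rw [div_lt_iff₀ hδ] at hn
    linarith
  have := key n
  have hb : Real.sqrt (ξ n) ≤ Real.sqrt lam₂ := Real.sqrt_le_sqrt (hcon n).le
  linarith
end

section
/- Let f, g : ℝ^N → [0,∞) with f, g continuous on ℝ^N \ {0} and integrable on ℝ^N. Suppose (1+|x|)^α e^{β|x|} g(x) → γ ∈ [0,∞) as |x| → ∞, and f(x) ≤ C exp(−(β+η)|x|) for all |x| ≥ 1, where α ≥ 0, β ≥ 0, η > 0. Then (1+r)^α e^{βr} ∫_{ℝ^N} g(rω − y) f(y) dy → γ ∫_{ℝ^N} f(y) e^{β ω·y} dy as r → ∞, uniformly in ω on the unit sphere. -/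
open Real MeasureTheory Filter Topology Metric Module
open scoped RealInnerProductSpace

/-!
Write `w(t) = (1 + t) ^ α * exp (β * t)` (`expWeight`); it is submultiplicative,
`w(|x|) ≤ w(|x - y|) w(|y|)`. Split `g` at a radius `R` beyond which `w(|z|) g(z) ≤ γ + 1`.

For the outer part, `w(r) g(rω - y) f(y)` is dominated by `(γ + 1) w(|y|) f(y)`, which is
integrable because `f` decays faster than `exp (-β |y|)`. Since `r - |rω - y| → ⟪ω, y⟫`, the
integrand tends to `γ exp (β ⟪ω, y⟫) f(y)`, and dominated convergence applies jointly in `(r, ω)`.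
The inner part only meets `f` where `|y| ≥ r - R`, so it contributes at most
`w(r) C exp (-(β + η) (r - R)) ∫ g → 0`.

Joint convergence at every point of the compact sphere, towards a continuous limit, is uniform
convergence on the sphere.
-/

theorem tendstoUniformlyOn_of_tendsto_prod {ι X Y : Type*} [TopologicalSpace X] [UniformSpace Y]
    {F : ι → X → Y} {f : X → Y} {p : Filter ι} {s : Set X} (hs : IsCompact s)
    (hf : ContinuousOn f s)
    (h : ∀ x ∈ s, Tendsto (fun q : ι × X => F q.1 q.2) (p ×ˢ 𝓝[s] x) (𝓝 (f x))) :
    TendstoUniformlyOn F f p s := by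
  rw [← tendstoLocallyUniformlyOn_iff_tendstoUniformlyOn_of_compact hs,
    tendstoLocallyUniformlyOn_iff_filter]
  intro x hx
  rw [tendstoUniformlyOnFilter_iff_tendsto]
  exact (((hf x hx).tendsto.comp tendsto_snd).prodMk_nhds (h x hx)).mono_right
    (nhds_le_uniformity _)

noncomputable def expWeight (α β t : ℝ) : ℝ := (1 + t) ^ α * exp (β * t)

section expWeight

variable {α β : ℝ}

lemma expWeight_pos {t : ℝ} (ht : 0 ≤ t) : 0 < expWeight α β t := by
  unfold expWeight; positivity

lemma expWeight_le_mul (hα : 0 ≤ α) (hβ : 0 ≤ β) {r s t : ℝ} (hr : 0 ≤ r) (hs : 0 ≤ s)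
    (ht : 0 ≤ t) (hrst : r ≤ s + t) :
    expWeight α β r ≤ expWeight α β s * expWeight α β t := by
  have hpow : (1 + r) ^ α ≤ (1 + s) ^ α * (1 + t) ^ α := by
    rw [← mul_rpow (by linarith) (by linarith)]
    exact rpow_le_rpow (by linarith) (by nlinarith) hα
  have hexp : exp (β * r) ≤ exp (β * s) * exp (β * t) := by
    rw [← exp_add, ← mul_add]; gcongr
  calc expWeight α β r ≤ ((1 + s) ^ α * (1 + t) ^ α) * (exp (β * s) * exp (β * t)) := by
        unfold expWeight; gcongr
    _ = expWeight α β s * expWeight α β t := by unfold expWeight; ring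

lemma expWeight_le_of_le_one (hα : 0 ≤ α) (hβ : 0 ≤ β) {t : ℝ} (ht₀ : 0 ≤ t) (ht₁ : t ≤ 1) :
    expWeight α β t ≤ expWeight α β 1 := by
  simpa [expWeight] using expWeight_le_mul hα hβ ht₀ zero_le_one le_rfl (by linarith : t ≤ 1 + 0)

lemma tendsto_expWeight_div {ι : Type*} {l : Filter ι} {u s : ι → ℝ} {L : ℝ} (hα : 0 ≤ α)
    (hs : Tendsto s l atTop) (hus : Tendsto (fun i => u i - s i) l (𝓝 L)) :
    Tendsto (fun i => expWeight α β (u i) / expWeight α β (s i)) l (𝓝 (exp (β * L))) := by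
  have hu : Tendsto u l atTop := by simpa using hs.atTop_add hus
  have hratio : Tendsto (fun i => (1 + u i) / (1 + s i)) l (𝓝 1) := by
    have hinv := tendsto_inv_atTop_zero.comp (tendsto_atTop_add_const_left _ 1 hs)
    have h := (hus.mul hinv).const_add 1
    rw [mul_zero, add_zero] at h
    refine h.congr' ?_
    filter_upwards [hs.eventually_ge_atTop 0] with i hi
    simp only [Function.comp_apply]
    field_simp
    ring
  have h := (hratio.rpow_const (Or.inr hα)).mul ((continuous_exp.tendsto _).comp (hus.const_mul β))
  rw [one_rpow, one_mul] at h
  refine h.congr' ?_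
  filter_upwards [hs.eventually_ge_atTop 0, hu.eventually_ge_atTop 0] with i hs hu
  simp only [Function.comp_apply, expWeight, mul_sub, exp_sub,
    div_rpow (by linarith : 0 ≤ 1 + u i) (by linarith : 0 ≤ 1 + s i)]
  ring

lemma tendsto_expWeight_mul_exp_neg {η : ℝ} (hη : 0 < η) (R : ℝ) :
    Tendsto (fun r => expWeight α β r * exp (-(β + η) * (r - R))) atTop (𝓝 0) := by
  have h := ((tendsto_rpow_mul_exp_neg_mul_atTop_nhds_zero α η hη).comp
    (tendsto_atTop_add_const_left _ 1 tendsto_id)).mul_const (exp (η + (β + η) * R))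
  rw [zero_mul] at h
  refine h.congr fun r => ?_
  simp only [Function.comp_apply, id, expWeight, mul_assoc, ← exp_add]
  ring_nf

end expWeight

section NormedGroup

variable {E : Type*} [NormedAddCommGroup E] {f h : E → ℝ} {α β η C K R : ℝ}

lemma expWeight_mul_comp_sub_mul_le (hα : 0 ≤ α) (hβ : 0 ≤ β) (hh0 : ∀ z, 0 ≤ h z)
    (hf0 : ∀ y, 0 ≤ f y) (hK : ∀ z, expWeight α β ‖z‖ * h z ≤ K) (x y : E) :
    expWeight α β ‖x‖ * (h (x - y) * f y) ≤ K * (expWeight α β ‖y‖ * f y) := by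
  have hw := expWeight_le_mul hα hβ (norm_nonneg x) (norm_nonneg (x - y)) (norm_nonneg y)
    (norm_le_norm_sub_add x y)
  have hDy : 0 ≤ expWeight α β ‖y‖ * f y := mul_nonneg (expWeight_pos (norm_nonneg y)).le (hf0 y)
  calc expWeight α β ‖x‖ * (h (x - y) * f y)
      ≤ expWeight α β ‖x - y‖ * expWeight α β ‖y‖ * (h (x - y) * f y) :=
        mul_le_mul_of_nonneg_right hw (mul_nonneg (hh0 _) (hf0 y))
    _ = (expWeight α β ‖x - y‖ * h (x - y)) * (expWeight α β ‖y‖ * f y) := by ring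
    _ ≤ K * (expWeight α β ‖y‖ * f y) := mul_le_mul_of_nonneg_right (hK _) hDy

lemma comp_sub_mul_le_of_support (hβη : 0 ≤ β + η) (hh0 : ∀ z, 0 ≤ h z)
    (hsupp : ∀ z, R ≤ ‖z‖ → h z = 0) (hC : 0 ≤ C)
    (hfdec : ∀ y, 1 ≤ ‖y‖ → f y ≤ C * exp (-(β + η) * ‖y‖)) {x : E} (hx : R + 1 ≤ ‖x‖) (y : E) :
    h (x - y) * f y ≤ C * exp (-(β + η) * (‖x‖ - R)) * h (x - y) := by
  rcases lt_or_ge ‖x - y‖ R with hxy | hxy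
  · have hy : ‖x‖ - R ≤ ‖y‖ := by linarith [norm_sub_norm_le x y, norm_sub_rev x y]
    have hfy : f y ≤ C * exp (-(β + η) * (‖x‖ - R)) :=
      (hfdec y (by linarith)).trans <| mul_le_mul_of_nonneg_left
        (exp_le_exp.2 (by nlinarith)) hC
    rw [mul_comm]
    exact mul_le_mul_of_nonneg_right hfy (hh0 _)
  · simp [hsupp _ hxy]

lemma Filter.Tendsto.exists_forall_norm_ge_le {F : E → ℝ} {γ c : ℝ}
    (hF : Tendsto F (Bornology.cobounded E) (𝓝 γ)) (hc : γ < c) :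
    ∃ R, ∀ z, R ≤ ‖z‖ → F z ≤ c := by
  have := hF.eventually (eventually_le_nhds hc)
  rw [← comap_norm_atTop, eventually_comap, eventually_atTop] at this
  obtain ⟨R, hR⟩ := this
  exact ⟨R, fun z hz => hR _ hz z rfl⟩

end NormedGroup

section InnerProduct

variable {E : Type*} [NormedAddCommGroup E] [InnerProductSpace ℝ E]

lemma abs_sub_norm_smul_sub_sub_inner_le {ω : E} (hω : ‖ω‖ = 1) {r : ℝ} (hr : 0 < r) (y : E) :
    |(r - ‖r • ω - y‖) - ⟪ω, y⟫| ≤ 2 * ‖y‖ ^ 2 / r := by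
  set s := ‖r • ω - y‖
  set c := ⟪ω, y⟫
  have hs0 : 0 ≤ s := norm_nonneg _
  have hs : s ^ 2 = r ^ 2 - 2 * r * c + ‖y‖ ^ 2 := by
    rw [norm_sub_sq_real, norm_smul, real_inner_smul_left, hω, norm_of_nonneg hr.le]; ring
  have hrs : |r - s| ≤ ‖y‖ := by
    simpa [s, hω, norm_smul, abs_of_pos hr] using abs_norm_sub_norm_le (r • ω) (r • ω - y)
  have hc : |c| ≤ ‖y‖ := by simpa [hω] using abs_real_inner_le_norm ω y
  -- rationalise: `r - s = (r ^ 2 - s ^ 2) / (r + s)`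
  have key : (r - s - c) * (r + s) = c * (r - s) - ‖y‖ ^ 2 := by linear_combination -hs
  rw [le_div_iff₀ hr]
  calc |r - s - c| * r ≤ |r - s - c| * (r + s) := by
        gcongr; linarith
    _ = |c * (r - s) - ‖y‖ ^ 2| := by
        rw [← key, abs_mul, abs_of_nonneg (by linarith : 0 ≤ r + s)]
    _ ≤ |c| * |r - s| + ‖y‖ ^ 2 :=
        (abs_sub _ _).trans_eq (by rw [abs_mul, abs_of_nonneg (sq_nonneg ‖y‖)])
    _ ≤ 2 * ‖y‖ ^ 2 := by nlinarith [abs_nonneg c, abs_nonneg (r - s)]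

lemma tendsto_sub_norm_smul_sub (y w₀ : E) :
    Tendsto (fun q : ℝ × E => q.1 - ‖q.1 • q.2 - y‖) (atTop ×ˢ 𝓝[sphere 0 1] w₀)
      (𝓝 ⟪w₀, y⟫) := by
  have hinner : Tendsto (fun q : ℝ × E => ⟪q.2, y⟫) (atTop ×ˢ 𝓝[sphere 0 1] w₀)
      (𝓝 ⟪w₀, y⟫) :=
    ((continuous_id.inner continuous_const).tendsto w₀).comp
      (tendsto_snd.mono_right nhdsWithin_le_nhds)
  have herr : Tendsto (fun q : ℝ × E => q.1 - ‖q.1 • q.2 - y‖ - ⟪q.2, y⟫)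
      (atTop ×ˢ 𝓝[sphere 0 1] w₀) (𝓝 0) := by
    refine squeeze_zero_norm' ?_
      ((tendsto_const_nhds (x := 2 * ‖y‖ ^ 2)).div_atTop tendsto_fst)
    filter_upwards [prod_mem_prod (Ioi_mem_atTop 0) self_mem_nhdsWithin] with q ⟨hr, hω⟩
    exact abs_sub_norm_smul_sub_sub_inner_le (mem_sphere_zero_iff_norm.1 hω) hr y
  simpa using herr.add hinner

lemma eventually_norm_smul_eq {l : Filter E} (hl : l ≤ 𝓟 (sphere 0 1)) :
    ∀ᶠ q : ℝ × E in atTop ×ˢ l, ‖q.1 • q.2‖ = q.1 := by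
  filter_upwards [prod_mem_prod (Ici_mem_atTop 0) (hl (mem_principal_self _))] with q ⟨hr, hω⟩
  rw [norm_smul, mem_sphere_zero_iff_norm.1 hω, mul_one, norm_of_nonneg hr]

lemma continuousOn_integral_mul_exp_inner [MeasurableSpace E] [OpensMeasurableSpace E]
    {μ : Measure E} {f : E → ℝ} {α β : ℝ} (hα : 0 ≤ α) (hβ : 0 ≤ β)
    (hf : AEStronglyMeasurable f μ) (hf0 : ∀ y, 0 ≤ f y)
    (hD : Integrable (fun y => expWeight α β ‖y‖ * f y) μ) :
    ContinuousOn (fun ω => ∫ y, f y * exp (β * ⟪ω, y⟫) ∂μ) (closedBall 0 1) := by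
  refine continuousOn_of_dominated
    (fun ω _ => hf.mul (Continuous.aestronglyMeasurable (by fun_prop)))
    (fun ω hω => Eventually.of_forall fun y => ?_) hD
    (Eventually.of_forall fun y => (by fun_prop : Continuous _).continuousOn)
  have hinner : ⟪ω, y⟫ ≤ ‖y‖ := (real_inner_le_norm ω y).trans
    (mul_le_of_le_one_left (norm_nonneg y) (mem_closedBall_zero_iff.1 hω))
  have hpow : 1 ≤ (1 + ‖y‖) ^ α := one_le_rpow (by linarith [norm_nonneg y]) hα
  rw [norm_of_nonneg (mul_nonneg (hf0 y) (exp_pos _).le)]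
  calc f y * exp (β * ⟪ω, y⟫) ≤ f y * exp (β * ‖y‖) := by gcongr; exact hf0 y
    _ ≤ expWeight α β ‖y‖ * f y := by
      unfold expWeight
      nlinarith [mul_nonneg (hf0 y) (exp_pos (β * ‖y‖)).le]

end InnerProduct

section HaarMeasure

variable {E : Type*} [NormedAddCommGroup E] [InnerProductSpace ℝ E] [FiniteDimensional ℝ E]
  [MeasurableSpace E] [BorelSpace E] {μ : Measure E} [μ.IsAddHaarMeasure]
  {f h : E → ℝ} {α β γ η C K R : ℝ}

lemma integrable_one_add_norm_rpow_mul_exp_neg (a : ℝ) {b : ℝ} (hb : 0 < b) :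
    Integrable (fun y : E => (1 + ‖y‖) ^ a * exp (-b * (1 + ‖y‖))) μ := by
  set d : ℝ := finrank ℝ E + 1
  have hdecay : Tendsto (fun y : E => (1 + ‖y‖) ^ (a + d) * exp (-b * (1 + ‖y‖)))
      (cocompact E) (𝓝 0) :=
    (tendsto_rpow_mul_exp_neg_mul_atTop_nhds_zero _ b hb).comp
      (tendsto_atTop_add_const_left _ 1 tendsto_norm_cocompact_atTop)
  have hcont : Continuous fun y : E => (1 + ‖y‖) ^ a * exp (-b * (1 + ‖y‖)) :=
    ((continuous_const.add continuous_norm).rpow_const fun y =>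
      Or.inl (by positivity : (0 : ℝ) < 1 + ‖y‖).ne').mul (by fun_prop)
  refine hcont.locallyIntegrable.integrable_of_isBigO_cocompact (g := fun y => (1 + ‖y‖) ^ (-d))
    ?_ ((integrable_one_add_norm (by simp [d])).integrableAtFilter _)
  refine ((hdecay.isBigO_one ℝ).mul (Asymptotics.isBigO_refl _ _)).congr (fun y => ?_)
    (fun y => one_mul _)
  rw [mul_right_comm, ← rpow_add (by positivity), add_neg_cancel_right]

lemma integrable_expWeight_norm_mul (hα : 0 ≤ α) (hβ : 0 ≤ β)
    (hη : 0 < η) (hC : 0 ≤ C) (hf : Integrable f μ) (hf0 : ∀ y, 0 ≤ f y)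
    (hfdec : ∀ y, 1 ≤ ‖y‖ → f y ≤ C * exp (-(β + η) * ‖y‖)) :
    Integrable (fun y => expWeight α β ‖y‖ * f y) μ := by
  have hmajor : Integrable (fun y : E => expWeight α β 1 * f y
      + C * exp η * ((1 + ‖y‖) ^ α * exp (-η * (1 + ‖y‖)))) μ :=
    (hf.const_mul _).add ((integrable_one_add_norm_rpow_mul_exp_neg α hη).const_mul _)
  have hcont : Continuous fun y : E => expWeight α β ‖y‖ :=
    ((continuous_const.add continuous_norm).rpow_const fun y => Or.inr hα).mul (by fun_prop)
  refine hmajor.mono' (hcont.aestronglyMeasurable.mul hf.1) (Eventually.of_forall fun y => ?_)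
  have hw := expWeight_pos (α := α) (β := β) (norm_nonneg y)
  have htail : 0 ≤ C * exp η * ((1 + ‖y‖) ^ α * exp (-η * (1 + ‖y‖))) := by positivity
  rw [norm_of_nonneg (mul_nonneg hw.le (hf0 y))]
  rcases le_total ‖y‖ 1 with hy | hy
  · have := mul_le_mul_of_nonneg_right (expWeight_le_of_le_one hα hβ (norm_nonneg y) hy) (hf0 y)
    linarith
  · have hexp : exp (β * ‖y‖) * exp (-(β + η) * ‖y‖) = exp η * exp (-η * (1 + ‖y‖)) := by
      rw [← exp_add, ← exp_add]; ring_nf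
    calc expWeight α β ‖y‖ * f y ≤ expWeight α β ‖y‖ * (C * exp (-(β + η) * ‖y‖)) :=
          mul_le_mul_of_nonneg_left (hfdec y hy) hw.le
      _ = C * exp η * ((1 + ‖y‖) ^ α * exp (-η * (1 + ‖y‖))) := by
          unfold expWeight; linear_combination ((1 + ‖y‖) ^ α * C) * hexp
      _ ≤ _ := le_add_of_nonneg_left (mul_nonneg (expWeight_pos zero_le_one).le (hf0 y))

lemma aestronglyMeasurable_comp_sub_mul (hh : AEStronglyMeasurable h μ)
    (hf : AEStronglyMeasurable f μ) (x : E) :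
    AEStronglyMeasurable (fun y => h (x - y) * f y) μ :=
  (hh.comp_quasiMeasurePreserving (quasiMeasurePreserving_sub_left μ x)).mul hf

lemma integrable_comp_sub_mul_of_expWeight_mul_le (hα : 0 ≤ α) (hβ : 0 ≤ β)
    (hh : AEStronglyMeasurable h μ) (hh0 : ∀ z, 0 ≤ h z)
    (hK : ∀ z, expWeight α β ‖z‖ * h z ≤ K) (hf : AEStronglyMeasurable f μ) (hf0 : ∀ y, 0 ≤ f y)
    (hD : Integrable (fun y => expWeight α β ‖y‖ * f y) μ) (x : E) :
    Integrable (fun y => h (x - y) * f y) μ := by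
  have hw := expWeight_pos (α := α) (β := β) (norm_nonneg x)
  refine ((hD.const_mul K).const_mul (expWeight α β ‖x‖)⁻¹).mono'
    (aestronglyMeasurable_comp_sub_mul hh hf x) (Eventually.of_forall fun y => ?_)
  rw [norm_of_nonneg (mul_nonneg (hh0 _) (hf0 y)), le_inv_mul_iff₀ hw]
  exact expWeight_mul_comp_sub_mul_le hα hβ hh0 hf0 hK x y

lemma tendsto_expWeight_mul_integral_comp_sub_mul_of_expWeight_mul_le (hα : 0 ≤ α) (hβ : 0 ≤ β)
    (hh : AEStronglyMeasurable h μ) (hh0 : ∀ z, 0 ≤ h z)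
    (hK : ∀ z, expWeight α β ‖z‖ * h z ≤ K)
    (hhlim : Tendsto (fun z => expWeight α β ‖z‖ * h z) (Bornology.cobounded E) (𝓝 γ))
    (hf : AEStronglyMeasurable f μ) (hf0 : ∀ y, 0 ≤ f y)
    (hD : Integrable (fun y => expWeight α β ‖y‖ * f y) μ) (w₀ : E) :
    Tendsto (fun q : ℝ × E => expWeight α β q.1 * ∫ y, h (q.1 • q.2 - y) * f y ∂μ)
      (atTop ×ˢ 𝓝[sphere 0 1] w₀) (𝓝 (γ * ∫ y, f y * exp (β * ⟪w₀, y⟫) ∂μ)) := by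
  simp_rw [← integral_const_mul]
  refine tendsto_integral_filter_of_dominated_convergence (fun y => K * (expWeight α β ‖y‖ * f y))
    (Eventually.of_forall fun q => (aestronglyMeasurable_comp_sub_mul hh hf _).const_mul _)
    ?_ (hD.const_mul K) (Eventually.of_forall fun y => ?_)
  · filter_upwards [eventually_norm_smul_eq inf_le_right] with q hq
    refine Eventually.of_forall fun y => ?_
    have := expWeight_mul_comp_sub_mul_le hα hβ hh0 hf0 hK (q.1 • q.2) y
    rw [hq] at this
    have hr : 0 ≤ q.1 := hq ▸ norm_nonneg _
    rwa [norm_of_nonneg (mul_nonneg (expWeight_pos hr).le (mul_nonneg (hh0 _) (hf0 y)))]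
  · have hd := tendsto_sub_norm_smul_sub y w₀
    have hz : Tendsto (fun q : ℝ × E => ‖q.1 • q.2 - y‖) (atTop ×ˢ 𝓝[sphere 0 1] w₀) atTop := by
      simpa using tendsto_fst.atTop_add hd.neg
    have hlim := ((tendsto_expWeight_div (β := β) hα hz hd).mul
      (hhlim.comp (tendsto_norm_atTop_iff_cobounded.1 hz))).mul_const (f y)
    rw [show exp (β * ⟪w₀, y⟫) * γ * f y = γ * (f y * exp (β * ⟪w₀, y⟫)) by ring] at hlim
    refine hlim.congr fun q => ?_
    have := (expWeight_pos (α := α) (β := β) (norm_nonneg (q.1 • q.2 - y))).ne'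
    simp only [Function.comp_apply]
    field_simp

lemma integrable_comp_sub_mul_of_support (hβη : 0 ≤ β + η) (hh : Integrable h μ)
    (hh0 : ∀ z, 0 ≤ h z) (hsupp : ∀ z, R ≤ ‖z‖ → h z = 0) (hf : AEStronglyMeasurable f μ)
    (hf0 : ∀ y, 0 ≤ f y) (hC : 0 ≤ C) (hfdec : ∀ y, 1 ≤ ‖y‖ → f y ≤ C * exp (-(β + η) * ‖y‖))
    {x : E} (hx : R + 1 ≤ ‖x‖) :
    Integrable (fun y => h (x - y) * f y) μ :=
  ((hh.comp_sub_left x).const_mul _).mono' (aestronglyMeasurable_comp_sub_mul hh.1 hf x)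
    (Eventually.of_forall fun y => by
      rw [norm_of_nonneg (mul_nonneg (hh0 _) (hf0 y))]
      exact comp_sub_mul_le_of_support hβη hh0 hsupp hC hfdec hx y)

lemma tendsto_expWeight_mul_integral_comp_sub_mul_of_support (hβη : 0 ≤ β + η) (hη : 0 < η)
    (hh : Integrable h μ) (hh0 : ∀ z, 0 ≤ h z) (hsupp : ∀ z, R ≤ ‖z‖ → h z = 0)
    (hf : AEStronglyMeasurable f μ) (hf0 : ∀ y, 0 ≤ f y) (hC : 0 ≤ C)
    (hfdec : ∀ y, 1 ≤ ‖y‖ → f y ≤ C * exp (-(β + η) * ‖y‖)) {l : Filter E}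
    (hl : l ≤ 𝓟 (sphere 0 1)) :
    Tendsto (fun q : ℝ × E => expWeight α β q.1 * ∫ y, h (q.1 • q.2 - y) * f y ∂μ)
      (atTop ×ˢ l) (𝓝 0) := by
  have hmajor : Tendsto (fun q : ℝ × E => expWeight α β q.1 * exp (-(β + η) * (q.1 - R))
      * (C * ∫ z, h z ∂μ)) (atTop ×ˢ l) (𝓝 0) := by
    simpa using ((tendsto_expWeight_mul_exp_neg hη R).comp tendsto_fst).mul_const
      (C * ∫ z, h z ∂μ)
  refine squeeze_zero' ?_ ?_ hmajor
  · filter_upwards [tendsto_fst.eventually (eventually_ge_atTop 0)] with q hr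
    exact mul_nonneg (expWeight_pos hr).le
      (integral_nonneg fun y => mul_nonneg (hh0 _) (hf0 y))
  · filter_upwards [eventually_norm_smul_eq hl,
      tendsto_fst.eventually (eventually_ge_atTop (R + 1))] with q hq hr
    have hx : R + 1 ≤ ‖q.1 • q.2‖ := by rwa [hq]
    have hint : ∫ y, h (q.1 • q.2 - y) * f y ∂μ ≤ C * exp (-(β + η) * (q.1 - R)) * ∫ z, h z ∂μ := by
      calc ∫ y, h (q.1 • q.2 - y) * f y ∂μ
          ≤ ∫ y, C * exp (-(β + η) * (q.1 - R)) * h (q.1 • q.2 - y) ∂μ :=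
            integral_mono (integrable_comp_sub_mul_of_support hβη hh hh0 hsupp hf hf0 hC hfdec hx)
              ((hh.comp_sub_left _).const_mul _)
              fun y => by
                simpa only [hq] using comp_sub_mul_le_of_support hβη hh0 hsupp hC hfdec hx y
        _ = C * exp (-(β + η) * (q.1 - R)) * ∫ z, h z ∂μ := by
            rw [integral_const_mul, integral_sub_left_eq_self]
    calc expWeight α β q.1 * ∫ y, h (q.1 • q.2 - y) * f y ∂μ
        ≤ expWeight α β q.1 * (C * exp (-(β + η) * (q.1 - R)) * ∫ z, h z ∂μ) :=
          mul_le_mul_of_nonneg_left hint (expWeight_pos (hq ▸ norm_nonneg _)).le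
      _ = _ := by ring

theorem tendsto_expWeight_mul_integral_comp_sub_mul {g : E → ℝ} (hα : 0 ≤ α)
    (hβ : 0 ≤ β) (hη : 0 < η) (hγ : 0 ≤ γ) (hf : Integrable f μ) (hf0 : ∀ y, 0 ≤ f y)
    (hg : Integrable g μ) (hg0 : ∀ z, 0 ≤ g z) (hC : 0 ≤ C)
    (hfdec : ∀ y, 1 ≤ ‖y‖ → f y ≤ C * exp (-(β + η) * ‖y‖))
    (hglim : Tendsto (fun z => expWeight α β ‖z‖ * g z) (Bornology.cobounded E) (𝓝 γ)) (w₀ : E) :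
    Tendsto (fun q : ℝ × E => expWeight α β q.1 * ∫ y, g (q.1 • q.2 - y) * f y ∂μ)
      (atTop ×ˢ 𝓝[sphere 0 1] w₀) (𝓝 (γ * ∫ y, f y * exp (β * ⟪w₀, y⟫) ∂μ)) := by
  obtain ⟨R, hR⟩ := hglim.exists_forall_norm_ge_le (lt_add_one γ)
  obtain ⟨B, hB⟩ : ∃ B, B = ball (0 : E) R := ⟨_, rfl⟩
  have hβη : 0 ≤ β + η := by linarith
  have hD := integrable_expWeight_norm_mul hα hβ hη hC hf hf0 hfdec
  have hfar_meas : AEStronglyMeasurable (Bᶜ.indicator g) μ :=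
    hg.1.indicator (hB ▸ measurableSet_ball).compl
  have hfar0 : ∀ z, 0 ≤ Bᶜ.indicator g z := Set.indicator_nonneg fun z _ => hg0 z
  have hfar_le : ∀ z, expWeight α β ‖z‖ * Bᶜ.indicator g z ≤ γ + 1 := fun z => by
    by_cases hz : z ∈ B
    · rw [Set.indicator_of_notMem (Set.notMem_compl_iff.2 hz), mul_zero]; linarith
    · rw [Set.indicator_of_mem hz]; exact hR z (by simpa [hB] using hz)
  have hfar_lim : Tendsto (fun z => expWeight α β ‖z‖ * Bᶜ.indicator g z) (Bornology.cobounded E)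
      (𝓝 γ) :=
    hglim.congr' (eventually_of_mem (Bornology.isBounded_def.1 (hB ▸ isBounded_ball))
      fun z hz => by simp only [Set.indicator_of_mem hz])
  have hnear0 : ∀ z, 0 ≤ B.indicator g z := Set.indicator_nonneg fun z _ => hg0 z
  have hnear_supp : ∀ z, R ≤ ‖z‖ → B.indicator g z = 0 := fun z hz =>
    Set.indicator_of_notMem (by simpa [hB] using hz) g
  have hfar := tendsto_expWeight_mul_integral_comp_sub_mul_of_expWeight_mul_le hα hβ hfar_meas
    hfar0 hfar_le hfar_lim hf.1 hf0 hD w₀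
  have hnear := tendsto_expWeight_mul_integral_comp_sub_mul_of_support (α := α) hβη hη
    (hg.indicator (hB ▸ measurableSet_ball)) hnear0 hnear_supp hf.1 hf0 hC hfdec
    (inf_le_right : 𝓝[sphere 0 1] w₀ ≤ _)
  rw [← add_zero (γ * _)]
  refine (hfar.add hnear).congr' ?_
  filter_upwards [eventually_norm_smul_eq inf_le_right,
    tendsto_fst.eventually (eventually_ge_atTop (R + 1))] with q hq hr
  have hx : R + 1 ≤ ‖q.1 • q.2‖ := by rwa [hq]
  rw [← mul_add, ← integral_add
    (integrable_comp_sub_mul_of_expWeight_mul_le hα hβ hfar_meas hfar0 hfar_le hf.1 hf0 hD _)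
    (integrable_comp_sub_mul_of_support hβη (hg.indicator (hB ▸ measurableSet_ball))
      hnear0 hnear_supp hf.1 hf0 hC hfdec hx)]
  simp_rw [← add_mul, Set.indicator_compl_add_self_apply]

end HaarMeasure

theorem stmt9_general (N : ℕ)
    (f g : EuclideanSpace ℝ (Fin N) → ℝ)
    (hf0 : ∀ x, 0 ≤ f x) (hg0 : ∀ x, 0 ≤ g x)
    (hfi : Integrable f) (hgi : Integrable g)
    (α β η γ C : ℝ) (hα : 0 ≤ α) (hβ : 0 ≤ β) (hη : 0 < η) (hγ : 0 ≤ γ)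
    (hglim : ∀ ε > 0, ∃ R : ℝ, ∀ x : EuclideanSpace ℝ (Fin N), R ≤ ‖x‖ →
      |(1 + ‖x‖) ^ α * Real.exp (β * ‖x‖) * g x - γ| ≤ ε)
    (hfdec : ∀ x : EuclideanSpace ℝ (Fin N), 1 ≤ ‖x‖ →
      f x ≤ C * Real.exp (-(β + η) * ‖x‖)) :
    ∀ ε > 0, ∃ R : ℝ, ∀ r ≥ R, ∀ ω : EuclideanSpace ℝ (Fin N), ‖ω‖ = 1 →
      |(1 + r) ^ α * Real.exp (β * r) * (∫ y, g (r • ω - y) * f y)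
        - γ * ∫ y, f y * Real.exp (β * (inner ℝ ω y : ℝ))| ≤ ε := by
  have hC : 0 ≤ max C 0 := le_max_right _ _
  have hfdec' : ∀ x : EuclideanSpace ℝ (Fin N), 1 ≤ ‖x‖ → f x ≤ max C 0 * exp (-(β + η) * ‖x‖) :=
    fun x hx => (hfdec x hx).trans (mul_le_mul_of_nonneg_right (le_max_left _ _) (exp_pos _).le)
  have hglim' : Tendsto (fun z => expWeight α β ‖z‖ * g z) (Bornology.cobounded _) (𝓝 γ) := by
    rw [← comap_norm_atTop, (atTop_basis.comap _).tendsto_iff nhds_basis_closedBall]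
    exact fun ε hε => (hglim ε hε).imp fun R hR => ⟨trivial, fun z hz => hR z hz⟩
  have hL := (continuousOn_integral_mul_exp_inner hα hβ hfi.1 hf0
    (integrable_expWeight_norm_mul hα hβ hη hC hfi hf0 hfdec')).mono sphere_subset_closedBall
  have hunif : TendstoUniformlyOn (fun r ω => expWeight α β r * ∫ y, g (r • ω - y) * f y)
      (fun ω => γ * ∫ y, f y * exp (β * ⟪ω, y⟫)) atTop (sphere 0 1) :=
    tendstoUniformlyOn_of_tendsto_prod (isCompact_sphere 0 1) (continuousOn_const.mul hL)
      fun w₀ _ => tendsto_expWeight_mul_integral_comp_sub_mul hα hβ hη hγ hfi hf0 hgi hg0 hC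
        hfdec' hglim' w₀
  intro ε hε
  obtain ⟨R, hR⟩ := eventually_atTop.1 (Metric.tendstoUniformlyOn_iff.1 hunif ε hε)
  refine ⟨R, fun r hr ω hω => ?_⟩
  rw [abs_sub_comm]
  exact (hR r hr ω (mem_sphere_zero_iff_norm.2 hω)).le

theorem stmt9 (N : ℕ) (hN : 1 ≤ N)
    (f g : EuclideanSpace ℝ (Fin N) → ℝ)
    (hf0 : ∀ x, 0 ≤ f x) (hg0 : ∀ x, 0 ≤ g x)
    (hfc : ContinuousOn f {x | x ≠ 0}) (hgc : ContinuousOn g {x | x ≠ 0})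
    (hfi : Integrable f) (hgi : Integrable g)
    (α β η γ C : ℝ) (hα : 0 ≤ α) (hβ : 0 ≤ β) (hη : 0 < η) (hγ : 0 ≤ γ)
    (hglim : ∀ ε > 0, ∃ R : ℝ, ∀ x : EuclideanSpace ℝ (Fin N), R ≤ ‖x‖ →
      |(1 + ‖x‖) ^ α * Real.exp (β * ‖x‖) * g x - γ| ≤ ε)
    (hfdec : ∀ x : EuclideanSpace ℝ (Fin N), 1 ≤ ‖x‖ →
      f x ≤ C * Real.exp (-(β + η) * ‖x‖)) :
    ∀ ε > 0, ∃ R : ℝ, ∀ r ≥ R, ∀ ω : EuclideanSpace ℝ (Fin N), ‖ω‖ = 1 →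
      |(1 + r) ^ α * Real.exp (β * r) * (∫ y, g (r • ω - y) * f y)
        - γ * ∫ y, f y * Real.exp (β * (inner ℝ ω y : ℝ))| ≤ ε :=
  stmt9_general N f g hf0 hg0 hfi hgi α β η γ C hα hβ hη hγ hglim hfdec
end

section
/- Under the hypotheses of the interaction-estimate lemma (f, g ≥ 0, integrable, g(x)(1+|x|)^α e^{β|x|} → γ, f(x) ≤ C e^{−(β+η)|x|} for |x| ≥ 1), for every ε > 0 with R_ε chosen so that (1+|x|)^α e^{β|x|}|g(x) − γ| ≤ ε for |x| ≥ R_ε, the contribution J₁(r,ω) = ∫_{|rω−y| ≤ R_ε} (1+r)^α e^{βr} g(rω−y) f(y) dy tends to 0 as r → ∞, uniformly in ω ∈ S^{N−1}. -/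
open Real MeasureTheory

theorem stmt10 (N : ℕ) (hN : 1 ≤ N)
    (f g : EuclideanSpace ℝ (Fin N) → ℝ)
    (hf0 : ∀ x, 0 ≤ f x) (hg0 : ∀ x, 0 ≤ g x)
    (hfi : Integrable f) (hgi : Integrable g)
    (α β η γ C : ℝ) (hα : 0 ≤ α) (hβ : 0 ≤ β) (hη : 0 < η) (hγ : 0 ≤ γ)
    (hfdec : ∀ x : EuclideanSpace ℝ (Fin N), 1 ≤ ‖x‖ →
      f x ≤ C * Real.exp (-(β + η) * ‖x‖))
    (ε Rε : ℝ) (hε : 0 < ε)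
    (hRε : ∀ x : EuclideanSpace ℝ (Fin N), Rε ≤ ‖x‖ →
      |(1 + ‖x‖) ^ α * Real.exp (β * ‖x‖) * g x - γ| ≤ ε) :
    ∀ δ > 0, ∃ r₀ : ℝ, ∀ r ≥ r₀, ∀ ω : EuclideanSpace ℝ (Fin N), ‖ω‖ = 1 →
      (∫ y in {y : EuclideanSpace ℝ (Fin N) | ‖r • ω - y‖ ≤ Rε},
        (1 + r) ^ α * Real.exp (β * r) * g (r • ω - y) * f y) ≤ δ := by
  intro δ hδ
  -- C is nonnegative
  have hC : 0 ≤ C := by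
    set x₀ : EuclideanSpace ℝ (Fin N) := EuclideanSpace.single ⟨0, hN⟩ (1:ℝ) with hx₀
    have hx : ‖x₀‖ = 1 := by simp [hx₀]
    have h1 := hfdec x₀ (le_of_eq hx.symm)
    have h2 := hf0 x₀
    nlinarith [Real.exp_pos (-(β + η) * ‖x₀‖)]
  have hgint : 0 ≤ ∫ y, g y := integral_nonneg hg0
  set D := C * (∫ y, g y) * Real.exp ((β + η) * Rε) with hD
  have hD0 : 0 ≤ D := by positivity
  -- the quantitative bound tends to zero
  have htend : Filter.Tendsto (fun r : ℝ => D * ((1 + r) ^ α * Real.exp (-η * r)))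
      Filter.atTop (nhds 0) := by
    have h1 : Filter.Tendsto (fun t : ℝ => t ^ α * Real.exp (-η * t))
        Filter.atTop (nhds 0) := tendsto_rpow_mul_exp_neg_mul_atTop_nhds_zero α η hη
    have h2 : Filter.Tendsto (fun r : ℝ => 1 + r) Filter.atTop Filter.atTop :=
      Filter.tendsto_atTop_add_const_left _ 1 Filter.tendsto_id
    have h3 := h1.comp h2
    have h4 := h3.const_mul (D * Real.exp η)
    rw [mul_zero] at h4
    convert h4 using 2 with r
    simp only [Function.comp]
    rw [show -η * (1 + r) = -η + -η * r by ring, Real.exp_add]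
    have he : Real.exp η * Real.exp (-η) = 1 := by rw [← Real.exp_add]; simp
    ring_nf
    rw [mul_assoc _ (Real.exp η) (Real.exp (-η)), he, mul_one]
  have hev : ∀ᶠ r in Filter.atTop, D * ((1 + r) ^ α * Real.exp (-η * r)) ≤ δ :=
    htend.eventually (eventually_le_nhds hδ)
  have hev2 : ∀ᶠ r in Filter.atTop, max 0 (Rε + 1) ≤ r := Filter.eventually_ge_atTop _
  obtain ⟨r₀, hr₀⟩ := Filter.eventually_atTop.mp (hev.and hev2)
  refine ⟨r₀, fun r hr ω hω => ?_⟩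
  obtain ⟨hrδ, hrR⟩ := hr₀ r hr
  have hr0 : 0 ≤ r := le_trans (le_max_left _ _) hrR
  have hrR1 : Rε + 1 ≤ r := le_trans (le_max_right _ _) hrR
  set S : Set (EuclideanSpace ℝ (Fin N)) := {y | ‖r • ω - y‖ ≤ Rε} with hSdef
  have hS : MeasurableSet S := by
    have : IsClosed S := isClosed_le (by fun_prop) continuous_const
    exact this.measurableSet
  have hnorm : ∀ y ∈ S, r - Rε ≤ ‖y‖ := by
    intro y hy
    have h1 : ‖r • ω‖ - ‖y‖ ≤ ‖r • ω - y‖ := norm_sub_norm_le _ _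
    have h2 : ‖r • ω‖ = r := by
      rw [norm_smul, hω, mul_one, Real.norm_eq_abs, abs_of_nonneg hr0]
    have h3 : ‖r • ω - y‖ ≤ Rε := hy
    linarith
  set M := C * Real.exp (-(β + η) * (r - Rε)) with hM
  have hfb : ∀ y ∈ S, f y ≤ M := by
    intro y hy
    have h1 : 1 ≤ ‖y‖ := by have := hnorm y hy; linarith
    calc f y ≤ C * Real.exp (-(β + η) * ‖y‖) := hfdec y h1
      _ ≤ M := by
          apply mul_le_mul_of_nonneg_left _ hC
          apply Real.exp_le_exp.2
          have := hnorm y hy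
          nlinarith
  set A := (1 + r) ^ α * Real.exp (β * r) with hA
  have hA0 : 0 ≤ A := by
    apply mul_nonneg _ (Real.exp_nonneg _)
    exact Real.rpow_nonneg (by linarith) α
  set K := A * M with hK
  have hgcomp : Integrable (fun y : EuclideanSpace ℝ (Fin N) => g (r • ω - y)) :=
    hgi.comp_sub_left (r • ω)
  have hGint : Integrable (fun y : EuclideanSpace ℝ (Fin N) => K * g (r • ω - y)) :=
    hgcomp.const_mul K
  have hK0 : 0 ≤ K := by
    apply mul_nonneg hA0
    exact mul_nonneg hC (Real.exp_nonneg _)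
  have step1 : (∫ y in S, (1 + r) ^ α * Real.exp (β * r) * g (r • ω - y) * f y)
      ≤ ∫ y in S, K * g (r • ω - y) := by
    apply integral_mono_of_nonneg
    · filter_upwards with y
      have := hf0 y
      have := hg0 (r • ω - y)
      positivity
    · exact hGint.restrict
    · refine (ae_restrict_iff' hS).2 (Filter.Eventually.of_forall fun y hy => ?_)
      have h1 : A * g (r • ω - y) * f y ≤ A * g (r • ω - y) * M :=
        mul_le_mul_of_nonneg_left (hfb y hy) (mul_nonneg hA0 (hg0 _))
      calc (1 + r) ^ α * Real.exp (β * r) * g (r • ω - y) * f y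
          = A * g (r • ω - y) * f y := by rw [hA]
        _ ≤ A * g (r • ω - y) * M := h1
        _ = K * g (r • ω - y) := by rw [hK]; ring
  have step2 : (∫ y in S, K * g (r • ω - y)) ≤ K * ∫ y, g y := by
    rw [integral_const_mul]
    apply mul_le_mul_of_nonneg_left _ hK0
    calc (∫ y in S, g (r • ω - y)) ≤ ∫ y, g (r • ω - y) :=
          setIntegral_le_integral hgcomp (Filter.Eventually.of_forall fun y => hg0 _)
      _ = ∫ y, g y := by
          exact integral_sub_left_eq_self g volume (r • ω)
  have step3 : K * (∫ y, g y) = D * ((1 + r) ^ α * Real.exp (-η * r)) := by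
    rw [hK, hA, hM, hD]
    have hexp : Real.exp (β * r) * Real.exp (-(β + η) * (r - Rε))
        = Real.exp (-η * r) * Real.exp ((β + η) * Rε) := by
      rw [← Real.exp_add, ← Real.exp_add]
      ring_nf
    linear_combination ((1 + r) ^ α * C * (∫ y, g y)) * hexp
  calc (∫ y in S, (1 + r) ^ α * Real.exp (β * r) * g (r • ω - y) * f y)
      ≤ K * ∫ y, g y := le_trans step1 step2
    _ = D * ((1 + r) ^ α * Real.exp (-η * r)) := step3
    _ ≤ δ := hrδ
end
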